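/- In the linear Bertrand duopoly, the grim-trigger patience threshold δ̄(p^c) = (π(p*,p^c) - π(p^c,p^c))/(π(p*,p^c) - π(p*,p*)) is strictly increasing in the collusive price p^c on the interval (p*, p^M]. -/

import Mathlib

/-!
Both the numerator `π(q,p) - π(p,p)` and the denominator `π(q,p) - π(q,q)` of the threshold vanish
at `p = q`, and the denominator is `(p - q)(q - c)d`. Cancelling `p - q` leaves an affine function
of `p` with slope `(b - d)/((q - c)d)`, positive as soon as the punishment price `q` exceeds the
marginal cost. The Nash price `p*` does exceed it.
-/

namespace LinearBertrand

variable (a b c d : ℝ)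

def profit (x y : ℝ) : ℝ := (x - c) * (a - b * x + d * y)

noncomputable def nashPrice : ℝ := (a + b * c) / (2 * b - d)

/-- The grim-trigger threshold for collusion at `p`, punished by reverting to the price `q`. -/
noncomputable def threshold (q p : ℝ) : ℝ :=
  (profit a b c d q p - profit a b c d p p) / (profit a b c d q p - profit a b c d q q)

variable {a b c d}

theorem cost_lt_nashPrice (ha : c * (b - d) < a) (hbd : d < b) (hd : 0 < d) :
    c < nashPrice a b c d := by
  rw [nashPrice, lt_div_iff₀ (by linarith)]
  linarith

variable (a b c d)

theorem profit_sub_profit_self (q p : ℝ) :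
    profit a b c d q p - profit a b c d p p =
      (p - q) * ((b - d) * (p + q) - (a + (b - d) * c) + (q - c) * d) := by
  unfold profit; ring

theorem profit_sub_profit (q p : ℝ) :
    profit a b c d q p - profit a b c d q q = (p - q) * ((q - c) * d) := by
  unfold profit; ring

theorem threshold_eq {q p : ℝ} (hp : p ≠ q) :
    threshold a b c d q p = ((b - d) * (p + q) - (a + (b - d) * c) + (q - c) * d) / ((q - c) * d) := by
  rw [threshold, profit_sub_profit_self, profit_sub_profit, mul_div_mul_left _ _ (sub_ne_zero.2 hp)]

variable {a b c d}

theorem threshold_strictMonoOn {q : ℝ} (hq : c < q) (hbd : d < b) (hd : 0 < d) :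
    StrictMonoOn (threshold a b c d q) (Set.Ioi q) := by
  intro p₁ hp₁ p₂ hp₂ h
  rw [threshold_eq a b c d (ne_of_gt hp₁), threshold_eq a b c d (ne_of_gt hp₂)]
  gcongr

end LinearBertrand

open LinearBertrand in
theorem threshold_strict_mono_general (a b c d p1 p2 : ℝ)
    (ha : a > c * (b - d)) (hbd : b > d) (hd : d > 0)
    (hp1 : (a + b * c) / (2 * b - d) < p1) (h12 : p1 < p2) :
    ((((a + b * c) / (2 * b - d)) - c) * (a - b * ((a + b * c) / (2 * b - d)) + d * p1) -
        (p1 - c) * (a - b * p1 + d * p1)) /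
      ((((a + b * c) / (2 * b - d)) - c) * (a - b * ((a + b * c) / (2 * b - d)) + d * p1) -
        (((a + b * c) / (2 * b - d)) - c) *
          (a - b * ((a + b * c) / (2 * b - d)) + d * ((a + b * c) / (2 * b - d)))) <
    ((((a + b * c) / (2 * b - d)) - c) * (a - b * ((a + b * c) / (2 * b - d)) + d * p2) -
        (p2 - c) * (a - b * p2 + d * p2)) /
      ((((a + b * c) / (2 * b - d)) - c) * (a - b * ((a + b * c) / (2 * b - d)) + d * p2) -
        (((a + b * c) / (2 * b - d)) - c) *
          (a - b * ((a + b * c) / (2 * b - d)) + d * ((a + b * c) / (2 * b - d)))) :=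
  threshold_strictMonoOn (cost_lt_nashPrice ha hbd hd) hbd hd hp1 (hp1.trans h12) h12

/-- The grim-trigger patience threshold
`δ̄(p^c) = (π(p*,p^c) - π(p^c,p^c)) / (π(p*,p^c) - π(p*,p*))`
is strictly increasing in `p^c` on `(p*, p^M]`. -/
theorem threshold_strict_mono (a b c d p1 p2 : ℝ)
    (ha : a > c * (b - d)) (hc : c < a / b) (hbd : b > d) (hd : d > 0) (hc0 : c > 0)
    (hp1 : (a + b * c) / (2 * b - d) < p1) (h12 : p1 < p2)
    (hp2 : p2 ≤ (a + (b - d) * c) / (2 * (b - d))) :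
    ((((a + b * c) / (2 * b - d)) - c) * (a - b * ((a + b * c) / (2 * b - d)) + d * p1) -
        (p1 - c) * (a - b * p1 + d * p1)) /
      ((((a + b * c) / (2 * b - d)) - c) * (a - b * ((a + b * c) / (2 * b - d)) + d * p1) -
        (((a + b * c) / (2 * b - d)) - c) *
          (a - b * ((a + b * c) / (2 * b - d)) + d * ((a + b * c) / (2 * b - d)))) <
    ((((a + b * c) / (2 * b - d)) - c) * (a - b * ((a + b * c) / (2 * b - d)) + d * p2) -
        (p2 - c) * (a - b * p2 + d * p2)) /
      ((((a + b * c) / (2 * b - d)) - c) * (a - b * ((a + b * c) / (2 * b - d)) + d * p2) -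
        (((a + b * c) / (2 * b - d)) - c) *
          (a - b * ((a + b * c) / (2 * b - d)) + d * ((a + b * c) / (2 * b - d)))) :=
  threshold_strict_mono_general a b c d p1 p2 ha hbd hd hp1 h12
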